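/- If the forward process is Markov, i.e., the conditional law p(x_t | x_{t-Δt}, x_0) does not depend on x_0, then within the DDIM family (γ_t² + λ_t² = σ_{t-Δt}²) one must have γ_t = μ_t σ_{t-Δt}² / (μ_{t-Δt} σ_t), and hence λ_t² = (σ_{t-Δt}²/σ_t²)(σ_t² - (μ_t²/μ_{t-Δt}²) σ_{t-Δt}²). -/

import Mathlib

open Real

/-- One-dimensional Gaussian probability density with mean `m` and variance `v`. -/
noncomputable def gpdf (m v x : ℝ) : ℝ :=
  (Real.sqrt (2 * π * v))⁻¹ * Real.exp (-(x - m) ^ 2 / (2 * v))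

/-! Dividing the Bayes identity at `x₀` by the one at `x₀ = 0` eliminates the unknown forward
kernel, so the exponent of `p(x_s|x_t,x₀) p(x_t|x₀) / p(x_s|x₀)` cannot depend on `x₀`. Its
cross terms in `x₀ x_s` and `x₀ x_t` must vanish, and eliminating `μ_s - γ μ_t / σ_t` between the
two resulting equations gives `γ μ_s σ_t = μ_t σ_s²`; the formula for `λ²` then follows from
`γ² + λ² = σ_s²`. -/

theorem gpdf_mul_gpdf_mul_gpdf_eq_iff {v₁ v₂ v₃ : ℝ} (h₁ : 0 < v₁) (h₂ : 0 < v₂) (h₃ : 0 < v₃)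
    (m₁ m₂ m₃ x₁ x₂ x₃ n₁ n₂ n₃ y₁ y₂ y₃ : ℝ) :
    gpdf m₁ v₁ x₁ * gpdf m₂ v₂ x₂ * gpdf m₃ v₃ x₃ = gpdf n₁ v₁ y₁ * gpdf n₂ v₂ y₂ * gpdf n₃ v₃ y₃ ↔
      (x₁ - m₁) ^ 2 / v₁ + (x₂ - m₂) ^ 2 / v₂ + (x₃ - m₃) ^ 2 / v₃ =
        (y₁ - n₁) ^ 2 / v₁ + (y₂ - n₂) ^ 2 / v₂ + (y₃ - n₃) ^ 2 / v₃ := by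
  set K := (√(2 * π * v₁))⁻¹ * (√(2 * π * v₂))⁻¹ * (√(2 * π * v₃))⁻¹
  have hK : K ≠ 0 := by positivity
  have hprod (a b c d e f : ℝ) : gpdf a v₁ b * gpdf c v₂ d * gpdf e v₃ f =
      K * exp (-((b - a) ^ 2 / v₁ + (d - c) ^ 2 / v₂ + (f - e) ^ 2 / v₃) / 2) := by
    have hsplit : -((b - a) ^ 2 / v₁ + (d - c) ^ 2 / v₂ + (f - e) ^ 2 / v₃) / 2 =
        -(b - a) ^ 2 / (2 * v₁) + -(d - c) ^ 2 / (2 * v₂) + -(f - e) ^ 2 / (2 * v₃) := by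
      ring
    rw [hsplit, exp_add, exp_add]
    simp only [gpdf, K]
    ring
  rw [hprod, hprod, mul_right_inj' hK, exp_eq_exp]
  constructor <;> intro h <;> linarith

theorem ddim_gamma_relation_of_exponent_invariant {μs μt σs σt γ l : ℝ}
    (hσs : σs ≠ 0) (hσt : σt ≠ 0)
    (h : ∀ x0 xs xt : ℝ,
      (xs - (μs * x0 + γ * (xt - μt * x0) / σt)) ^ 2 / l + (xt - μt * x0) ^ 2 / σt ^ 2
          + xs ^ 2 / σs ^ 2 =
        (xs - γ * xt / σt) ^ 2 / l + xt ^ 2 / σt ^ 2 + (xs - μs * x0) ^ 2 / σs ^ 2) :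
    γ * μs * σt = μt * σs ^ 2 := by
  have hA_add_B := h 1 1 0
  have hA_sub_B := h 1 (-1) 0
  have hA_add_C := h 1 0 1
  -- the exponent is `A x₀² + B x₀ x_s + C x₀ x_t`; these are `B = 0` and `C = 0`
  have hB : (μs - γ * μt / σt) / l = μs / σs ^ 2 := by
    linear_combination -(hA_add_B - hA_sub_B) / 4
  have hC : (μs - γ * μt / σt) / l * γ / σt = μt / σt ^ 2 := by
    linear_combination (hA_add_C - (hA_add_B + hA_sub_B) / 2) / 2
  rw [hB] at hC
  field_simp at hC
  linear_combination hC

theorem markov_forces_ddpm_gamma_general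
    (μs μt σs σt γ lam : ℝ)
    (hμs : 0 < μs) (hσs : 0 < σs) (hσt : 0 < σt)
    (hlam : 0 < lam)
    (hsum : γ ^ 2 + lam ^ 2 = σs ^ 2)
    (m : ℝ → ℝ) (v : ℝ)
    (hmarkov : ∀ x0 xs xt : ℝ,
      gpdf (μs * x0 + γ * (xt - μt * x0) / σt) (lam ^ 2) xs
          * gpdf (μt * x0) (σt ^ 2) xt
        = gpdf (m xs) v xt * gpdf (μs * x0) (σs ^ 2) xs) :
    γ = μt * σs ^ 2 / (μs * σt) ∧
    lam ^ 2 = σs ^ 2 / σt ^ 2 * (σt ^ 2 - μt ^ 2 / μs ^ 2 * σs ^ 2) := by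
  have hexponent_indep : ∀ x0 xs xt : ℝ,
      (xs - (μs * x0 + γ * (xt - μt * x0) / σt)) ^ 2 / lam ^ 2 + (xt - μt * x0) ^ 2 / σt ^ 2
          + xs ^ 2 / σs ^ 2 =
        (xs - γ * xt / σt) ^ 2 / lam ^ 2 + xt ^ 2 / σt ^ 2 + (xs - μs * x0) ^ 2 / σs ^ 2 := by
    intro x0 xs xt
    have hcross :
        gpdf (μs * x0 + γ * (xt - μt * x0) / σt) (lam ^ 2) xs * gpdf (μt * x0) (σt ^ 2) xt
            * gpdf (μs * 0) (σs ^ 2) xs =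
          gpdf (μs * 0 + γ * (xt - μt * 0) / σt) (lam ^ 2) xs * gpdf (μt * 0) (σt ^ 2) xt
            * gpdf (μs * x0) (σs ^ 2) xs := by
      linear_combination gpdf (μs * 0) (σs ^ 2) xs * hmarkov x0 xs xt
        - gpdf (μs * x0) (σs ^ 2) xs * hmarkov 0 xs xt
    rw [gpdf_mul_gpdf_mul_gpdf_eq_iff (by positivity) (by positivity) (by positivity)] at hcross
    simpa only [mul_zero, sub_zero, zero_add] using hcross
  have hrel := ddim_gamma_relation_of_exponent_invariant hσs.ne' hσt.ne' hexponent_indep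
  refine ⟨by field_simp; linear_combination hrel, ?_⟩
  field_simp
  linear_combination (μs ^ 2 * σt ^ 2) * hsum - (γ * μs * σt + μt * σs ^ 2) * hrel

/-- If the forward process is Markov — i.e. the forward conditional
`p(x_t | x_{t-Δt}, x_0)` equals some Gaussian `N(m(x_{t-Δt}), v)` not depending on `x_0` —
then within the DDIM family (`γ² + λ² = σ_{t-Δt}²`, reverse kernel
`N(μ_{t-Δt} x_0 + γ(x_t - μ_t x_0)/σ_t, λ²)`, forward marginals `N(μ_r x_0, σ_r²)`)
one must have `γ = μ_t σ_{t-Δt}²/(μ_{t-Δt} σ_t)` and hence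
`λ² = (σ_{t-Δt}²/σ_t²)(σ_t² - (μ_t²/μ_{t-Δt}²) σ_{t-Δt}²)`.
Here `μs, σs` denote `μ_{t-Δt}, σ_{t-Δt}`, and the Bayes identity
`p(x_{t-Δt}|x_t,x_0) p(x_t|x_0) = p(x_t|x_{t-Δt},x_0) p(x_{t-Δt}|x_0)` encodes
the joint Gaussian structure. -/
theorem markov_forces_ddpm_gamma
    (μs μt σs σt γ lam : ℝ)
    (hμs : 0 < μs) (hμt : 0 < μt) (hσs : 0 < σs) (hσt : 0 < σt)
    (hγ0 : 0 ≤ γ) (hlam : 0 < lam)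
    (hsum : γ ^ 2 + lam ^ 2 = σs ^ 2)
    (m : ℝ → ℝ) (v : ℝ) (hv : 0 < v)
    (hmarkov : ∀ x0 xs xt : ℝ,
      gpdf (μs * x0 + γ * (xt - μt * x0) / σt) (lam ^ 2) xs
          * gpdf (μt * x0) (σt ^ 2) xt
        = gpdf (m xs) v xt * gpdf (μs * x0) (σs ^ 2) xs) :
    γ = μt * σs ^ 2 / (μs * σt) ∧
    lam ^ 2 = σs ^ 2 / σt ^ 2 * (σt ^ 2 - μt ^ 2 / μs ^ 2 * σs ^ 2) :=
  markov_forces_ddpm_gamma_general μs μt σs σt γ lam hμs hσs hσt hlam hsum m v hmarkov
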